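/- Let $Z$ be a metric space, $j \geq 1$, and let $\mathcal{C}$ be a collection of at most $j$ closed balls in $Z$, each of radius at most $r$. Then there exists a pairwise disjoint collection $\mathcal{C}'$ of at most $j$ closed balls in $Z$, each of radius less than $4^j r$, such that the union of the interiors (open balls) of the balls in $\mathcal{C}'$ covers the union of the balls in $\mathcal{C}$. -/

import Mathlib

/-!
Induct on `j`, thickening every ball by `r / 2`. If the thickened balls are pairwise disjoint
they already form the required family, and the thickening is what makes the open balls cover
the original closed ones. Otherwise two of them, centred at `p` and `q`, meet; then both
original balls lie in the closed ball of radius `4r` about `q`, and replacing the pair by this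
ball leaves at most `j - 1` balls of radius at most `4r`, to which the induction hypothesis
applies.
-/

open Metric

theorem Finset.card_insert_erase_erase_lt {α : Type*} [DecidableEq α] {s : Finset α}
    {a b : α} (c : α) (ha : a ∈ s) (hb : b ∈ s) (hab : a ≠ b) :
    (insert c ((s.erase a).erase b)).card < s.card := by
  have hb' : b ∈ s.erase a := Finset.mem_erase.2 ⟨hab.symm, hb⟩
  have h2 : 2 ≤ s.card := Finset.one_lt_card_iff.2 ⟨a, b, ha, hb, hab⟩
  have := Finset.card_insert_le c ((s.erase a).erase b)
  rw [Finset.card_erase_of_mem hb', Finset.card_erase_of_mem ha] at this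
  omega

section BallCover

variable {Z : Type*} [PseudoMetricSpace Z]

def IsDisjointBallCover (C D : Finset (Z × ℝ)) (R : ℝ) : Prop :=
  (∀ p ∈ D, p.2 < R) ∧
    (D : Set (Z × ℝ)).Pairwise
      (fun p q => Disjoint (closedBall p.1 p.2) (closedBall q.1 q.2)) ∧
    (⋃ p ∈ C, closedBall p.1 p.2) ⊆ ⋃ p ∈ D, ball p.1 p.2

theorem IsDisjointBallCover.of_biUnion_subset {C C' D : Finset (Z × ℝ)} {R : ℝ}
    (hD : IsDisjointBallCover C' D R)
    (hC : (⋃ p ∈ C, closedBall p.1 p.2) ⊆ ⋃ p ∈ C', closedBall p.1 p.2) :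
    IsDisjointBallCover C D R :=
  ⟨hD.1, hD.2.1, hC.trans hD.2.2⟩

theorem isDisjointBallCover_image_thicken [DecidableEq Z] {C : Finset (Z × ℝ)} {δ R : ℝ}
    (hδ : 0 < δ)
    (hR : ∀ p ∈ C, p.2 + δ < R)
    (hdisj : (C.image fun p => (p.1, p.2 + δ) : Set (Z × ℝ)).Pairwise
      (fun p q => Disjoint (closedBall p.1 p.2) (closedBall q.1 q.2))) :
    IsDisjointBallCover C (C.image fun p => (p.1, p.2 + δ)) R := by
  refine ⟨?_, hdisj, Set.iUnion₂_subset fun p hp => ?_⟩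
  · simpa only [Finset.forall_mem_image] using hR
  · calc closedBall p.1 p.2 ⊆ ball p.1 (p.2 + δ) := closedBall_subset_ball (by linarith)
      _ ⊆ _ := fun y hy => Set.mem_iUnion₂.2 ⟨_, Finset.mem_image_of_mem _ hp, hy⟩

theorem closedBall_subset_closedBall_of_not_disjoint {x y : Z} {a b δ : ℝ}
    (h : ¬Disjoint (closedBall x (a + δ)) (closedBall y (b + δ))) :
    closedBall x a ⊆ closedBall y (2 * a + b + 2 * δ) := by
  have hxy : dist x y ≤ a + δ + (b + δ) := not_lt.1 (mt closedBall_disjoint_closedBall h)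
  exact closedBall_subset_closedBall' (by linarith)

theorem biUnion_closedBall_subset_merge [DecidableEq Z] {C : Finset (Z × ℝ)} {p q : Z × ℝ}
    {R : ℝ} (hp : closedBall p.1 p.2 ⊆ closedBall q.1 R) (hq : q.2 ≤ R) :
    (⋃ x ∈ C, closedBall x.1 x.2) ⊆
      ⋃ x ∈ insert (q.1, R) ((C.erase p).erase q), closedBall x.1 x.2 := by
  refine Set.iUnion₂_subset fun x hx => ?_
  have hmerged : closedBall q.1 R ⊆ ⋃ x ∈ insert (q.1, R) ((C.erase p).erase q),
      closedBall x.1 x.2 :=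
    fun y hy => Set.mem_iUnion₂.2 ⟨_, Finset.mem_insert_self _ _, hy⟩
  by_cases hxp : x = p
  · exact hxp ▸ hp.trans hmerged
  by_cases hxq : x = q
  · exact hxq ▸ (closedBall_subset_closedBall hq).trans hmerged
  · have hx' : x ∈ (C.erase p).erase q :=
      Finset.mem_erase.2 ⟨hxq, Finset.mem_erase.2 ⟨hxp, hx⟩⟩
    exact fun y hy => Set.mem_iUnion₂.2 ⟨x, Finset.mem_insert_of_mem hx', hy⟩

theorem exists_isDisjointBallCover (j : ℕ) {r : ℝ} (hr : 0 < r)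
    {C : Finset (Z × ℝ)} (hcard : C.card ≤ j) (hrad : ∀ p ∈ C, p.2 ≤ r) :
    ∃ D : Finset (Z × ℝ), D.card ≤ j ∧ IsDisjointBallCover C D (4 ^ j * r) := by
  classical
  induction j generalizing r C with
  | zero =>
    refine ⟨∅, by simp, by simp, by simp, ?_⟩
    simp [Finset.card_eq_zero.1 (Nat.le_zero.1 hcard)]
  | succ j ih =>
    have h4 : (4 : ℝ) ≤ 4 ^ (j + 1) := le_self_pow₀ (by norm_num) (by omega)
    by_cases hT : (C.image fun p => (p.1, p.2 + r / 2) : Set (Z × ℝ)).Pairwise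
        (fun p q => Disjoint (closedBall p.1 p.2) (closedBall q.1 q.2))
    · refine ⟨_, Finset.card_image_le.trans hcard,
        isDisjointBallCover_image_thicken (half_pos hr) (fun p hp => ?_) hT⟩
      nlinarith [hrad p hp]
    obtain ⟨p, hp, q, hq, hpq, hmeet⟩ : ∃ p ∈ C, ∃ q ∈ C, p ≠ q ∧
        ¬Disjoint (closedBall p.1 (p.2 + r / 2)) (closedBall q.1 (q.2 + r / 2)) := by
      simp only [Set.Pairwise, Finset.coe_image, Set.mem_image, Finset.mem_coe] at hT
      push Not at hT
      obtain ⟨_, ⟨p, hp, rfl⟩, _, ⟨q, hq, rfl⟩, hne, hmeet⟩ := hT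
      exact ⟨p, hp, q, hq, fun h => hne (h ▸ rfl), hmeet⟩
    have hmerge : closedBall p.1 p.2 ⊆ closedBall q.1 (4 * r) :=
      (closedBall_subset_closedBall_of_not_disjoint hmeet).trans
        (closedBall_subset_closedBall (by linarith [hrad p hp, hrad q hq]))
    obtain ⟨D, hDcard, hD⟩ := ih (r := 4 * r) (C := insert (q.1, 4 * r) ((C.erase p).erase q))
      (by positivity)
      (by have := Finset.card_insert_erase_erase_lt (q.1, 4 * r) hp hq hpq; omega)
      (by
        simp only [Finset.forall_mem_insert, le_refl, true_and]
        exact fun x hx => (hrad x (Finset.mem_of_mem_erase (Finset.mem_of_mem_erase hx))).trans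
          (by linarith))
    refine ⟨D, hDcard.trans j.le_succ, ?_⟩
    rw [pow_succ, mul_assoc]
    exact hD.of_biUnion_subset
      (biUnion_closedBall_subset_merge hmerge (by linarith [hrad q hq]))

end BallCover

theorem stmt_0_general {Z : Type*} [MetricSpace Z] (j : ℕ) (r : ℝ) (hr : 0 < r)
    (C : Finset (Z × ℝ)) (hcard : C.card ≤ j) (hrad : ∀ p ∈ C, p.2 ≤ r) :
    ∃ C' : Finset (Z × ℝ), C'.card ≤ j ∧ (∀ p ∈ C', p.2 < 4 ^ j * r) ∧
      ((C' : Set (Z × ℝ)).Pairwise fun p q =>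
        Disjoint (Metric.closedBall p.1 p.2) (Metric.closedBall q.1 q.2)) ∧
      (⋃ p ∈ C, Metric.closedBall p.1 p.2) ⊆ ⋃ p ∈ C', Metric.ball p.1 p.2 :=
  exists_isDisjointBallCover j hr hcard hrad

/-- Ball-combining lemma: a collection of at most `j` closed balls of radius at most `r`
in a metric space can be covered by the open balls of a pairwise disjoint collection of at
most `j` closed balls of radius less than `4^j * r`. -/
theorem stmt_0 {Z : Type*} [MetricSpace Z] (j : ℕ) (hj : 1 ≤ j) (r : ℝ) (hr : 0 < r)
    (C : Finset (Z × ℝ)) (hcard : C.card ≤ j) (hrad : ∀ p ∈ C, p.2 ≤ r) :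
    ∃ C' : Finset (Z × ℝ), C'.card ≤ j ∧ (∀ p ∈ C', p.2 < 4 ^ j * r) ∧
      ((C' : Set (Z × ℝ)).Pairwise fun p q =>
        Disjoint (Metric.closedBall p.1 p.2) (Metric.closedBall q.1 q.2)) ∧
      (⋃ p ∈ C, Metric.closedBall p.1 p.2) ⊆ ⋃ p ∈ C', Metric.ball p.1 p.2 :=
  stmt_0_general j r hr C hcard hrad
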